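/- arXiv:2510.06152 — 2 statements merged into one kernel-verified Lean document; each statement's English description precedes it below -/
import Mathlib

section
/- Let k be a perfect field of characteristic p > 0 and let G be a commutative affine group scheme of finite type over k. Then the first derived inverse limit R^1 lim of the inverse system ... → G → G → G, where each transition map is the relative Frobenius F_G : G → G, vanishes (as an fpqc abelian sheaf on k-algebras). -/
open TensorProduct

/-- A point of the Frobenius twist `G^{(p^{-n})}` of the affine group scheme `G = Spec A` over
`k` with values in the `k`-algebra `R`: a ring homomorphism `𝒪(G) → R` which is semilinear for
the `n`-th power of the Frobenius of `k` (for `n = 0` these are the usual `k`-points). -/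
def IsTwistedPoint (p : ℕ) (k : Type) [CommSemiring k] {A R : Type} [CommRing A] [CommRing R]
    [Algebra k A] [Algebra k R] (n : ℕ) (f : A →+* R) : Prop :=
  ∀ c : k, f (algebraMap k A (c ^ p ^ n)) = algebraMap k R c

/-!
The sequences `(y n)` with `y n = x n ⋆ F (y (n + 1))` form an affine `R`-scheme: the inverse limit
of copies of `G_R` along the maps `y ↦ x n ⋆ F y`. Its ring is the directed colimit of the rings
`R ⊗[k] 𝒪(G^{(p^{-n})})`, and its tautological points solve the equation. Each stage is free and
nonzero over `R`. A directed colimit of flat modules is flat by the equational criterion, and a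
directed colimit of faithfully flat algebras is faithfully flat, since `1 ∈ I • R'` would already
hold at a finite stage.
-/

namespace Module.IsTrivialRelation

variable {R M N ι : Type*} [CommRing R] [AddCommGroup M] [Module R M] [AddCommGroup N]
  [Module R N] [Fintype ι] {f : ι → R} {x : ι → M}

theorem map (h : IsTrivialRelation f x) (g : M →ₗ[R] N) : IsTrivialRelation f (g ∘ x) := by
  obtain ⟨k, a, y, hx, ha⟩ := h
  exact ⟨k, a, g ∘ y, fun i => by simp [hx i, map_sum], ha⟩

end Module.IsTrivialRelation

namespace DirectLimit

variable {R ι : Type*} [Preorder ι] [IsDirectedOrder ι] [Nonempty ι] {G : ι → Type*}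
  {T : ∀ ⦃i₁ i₂ : ι⦄, i₁ ≤ i₂ → Type*} {f : ∀ _ _ h, T h}
  [∀ i j (h : i ≤ j), FunLike (T h) (G i) (G j)] [DirectedSystem G (f · · ·)]

theorem exists_forall_eq_mk {κ : Type*} [Finite κ] (x : κ → DirectLimit G f) :
    ∃ i, ∃ y : κ → G i, ∀ t, x t = ⟦⟨i, y t⟩⟧ := by
  choose j z hz using fun t => exists_eq_mk f (x t)
  obtain ⟨i, hi⟩ := (Set.finite_range j).bddAbove
  exact ⟨i, fun t => f _ _ (hi (Set.mem_range_self t)) (z t),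
    fun t => (hz t).trans (eq_of_le _ _ _)⟩

section Module

variable [CommRing R] [∀ i, AddCommGroup (G i)] [∀ i, Module R (G i)]
  [∀ i j h, LinearMapClass (T h) R (G i) (G j)]

theorem _root_.Module.Flat.directLimit [∀ i, Module.Flat R (G i)] :
    Module.Flat R (DirectLimit G f) := by
  refine Module.Flat.of_forall_isTrivialRelation fun {l c x} hx => ?_
  obtain ⟨i, y, rfl⟩ : ∃ i, ∃ y : Fin l → G i, x = Module.of R ι G f i ∘ y := by
    obtain ⟨i, y, hy⟩ := exists_forall_eq_mk x
    exact ⟨i, y, funext hy⟩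
  have : Module.of R ι G f i (∑ t, c t • y t) = Module.of R ι G f i 0 := by
    simp only [map_sum, map_smul, map_zero]
    exact hx
  obtain ⟨j, hij, _, hj⟩ := Quotient.eq.mp this
  have hrel : Module.IsTrivialRelation c (fun t => f i j hij (y t)) :=
    Module.Flat.isTrivialRelation_of_sum_smul_eq_zero (by simpa [map_sum] using hj)
  convert hrel.map (Module.of R ι G f j) using 1
  ext t
  exact (Module.of_f ..).symm

theorem smul_top_eq_iSup (I : Ideal R) :
    I • (⊤ : Submodule R (DirectLimit G f)) =
      ⨆ i, (I • (⊤ : Submodule R (G i))).map (Module.of R ι G f i) := by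
  have htop : (⊤ : Submodule R (DirectLimit G f)) =
      ⨆ i, LinearMap.range (Module.of R ι G f i) := by
    refine (eq_top_iff.2 fun z _ => ?_).symm
    obtain ⟨i, x, rfl⟩ := exists_eq_mk f z
    exact Submodule.mem_iSup_of_mem i ⟨x, rfl⟩
  simp_rw [htop, Submodule.smul_iSup, Submodule.map_smul'', LinearMap.range_eq_map]

theorem directed_map_smul_top (I : Ideal R) :
    Directed (· ≤ ·) fun i => (I • (⊤ : Submodule R (G i))).map (Module.of R ι G f i) := by
  refine directed_of_isDirected_le fun i j hij => Submodule.map_le_iff_le_comap.2 fun x hx => ?_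
  rw [Submodule.mem_comap, ← Module.of_f (hij := hij)]
  exact Submodule.mem_map_of_mem
    (Submodule.smul_top_le_comap_smul_top I (LinearMapClass.linearMap (f i j hij)) hx)

end Module

variable [CommRing R] [∀ i, CommRing (G i)] [∀ i, Algebra R (G i)]
  [∀ i j h, AlgHomClass (T h) R (G i) (G j)]

theorem _root_.Module.FaithfullyFlat.directLimit [∀ i, Module.FaithfullyFlat R (G i)] :
    Module.FaithfullyFlat R (DirectLimit G f) := by
  refine (Module.FaithfullyFlat.iff_flat_and_ideal_smul_eq_top R _).2
    ⟨Module.Flat.directLimit, fun I hI => ?_⟩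
  have h1 : (1 : DirectLimit G f) ∈ I • ⊤ := hI ▸ Submodule.mem_top
  rw [smul_top_eq_iSup, Submodule.mem_iSup_of_directed _ (directed_map_smul_top I)] at h1
  obtain ⟨i, x, hx, hx1⟩ := h1
  obtain ⟨j, hij, _, hj⟩ := Quotient.eq.mp (hx1.trans (one_def i))
  have hj1 : (1 : G j) ∈ I • (⊤ : Submodule R (G j)) := by
    rw [← map_one (f i j hij), ← hj]
    exact Submodule.smul_top_le_comap_smul_top I (LinearMapClass.linearMap (f i j hij)) hx
  have htop : I • (⊤ : Submodule R (G j)) = ⊤ := by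
    rw [Ideal.smul_top_eq_map] at hj1 ⊢
    rw [Submodule.restrictScalars_eq_top_iff, Ideal.eq_top_iff_one]
    exact hj1
  exact ((Module.FaithfullyFlat.iff_flat_and_ideal_smul_eq_top R (G j)).1 inferInstance).2 I htop

end DirectLimit

namespace AlgHom

variable {R : Type*} [CommSemiring R] {G : ℕ → Type*} [∀ n, Semiring (G n)]
  [∀ n, Algebra R (G n)] (step : ∀ n, G n →ₐ[R] G (n + 1))

def natLERec (m n : ℕ) (h : m ≤ n) : G m →ₐ[R] G n :=
  Nat.leRecOn h (fun {k} φ => (step k).comp φ) (AlgHom.id R (G m))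

theorem coe_natLERec (m n : ℕ) (h : m ≤ n) :
    (natLERec step m n h : G m → G n) = Nat.leRecOn h (fun {k} => step k) := by
  obtain ⟨k, rfl⟩ := Nat.exists_eq_add_of_le h
  ext x
  induction k with
  | zero => simp [natLERec, Nat.leRecOn_self]
  | succ k ih =>
    rw [Nat.leRecOn_succ le_self_add, natLERec, Nat.leRecOn_succ le_self_add, ← natLERec,
      AlgHom.comp_apply, ih]

instance natLERec.directedSystem : DirectedSystem G fun i j h => natLERec step i j h :=
  ⟨fun _ _ => by simp [coe_natLERec, Nat.leRecOn_self],
   fun _ _ _ hij hjk _ => by simp [coe_natLERec, Nat.leRecOn_trans hij hjk]⟩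

theorem natLERec_succ (n : ℕ) (x : G n) : natLERec step n (n + 1) n.le_succ x = step n x := by
  simp [coe_natLERec, Nat.leRecOn_succ']

end AlgHom

namespace Algebra.TensorProduct

variable {R A B S : Type*} [CommRing R] [CommRing A] [CommRing B] [CommRing S] [Algebra R A]
  [Algebra R B]

noncomputable def productRingHom (f : A →+* S) (g : B →+* S)
    (hfg : f.comp (algebraMap R A) = g.comp (algebraMap R B)) : A ⊗[R] B →+* S :=
  letI := (f.comp (algebraMap R A)).toAlgebra
  (productMap (R := R) ⟨f, fun _ => rfl⟩ ⟨g, fun c => (RingHom.congr_fun hfg c).symm⟩).toRingHom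

@[simp]
theorem productRingHom_tmul (f : A →+* S) (g : B →+* S)
    (hfg : f.comp (algebraMap R A) = g.comp (algebraMap R B)) (a : A) (b : B) :
    productRingHom f g hfg (a ⊗ₜ b) = f a * g b :=
  rfl

end Algebra.TensorProduct

/-- `𝒪(G^{(p^{-n})})` for `G = Spec A`: the ring `A` with `k` acting through `c ↦ c ^ p ^ n`, so
that the `k`-algebra maps out of it are the twisted points of level `n`. -/
def FrobeniusTwist (_p : ℕ) (A : Type*) (_n : ℕ) : Type _ := A

namespace FrobeniusTwist

variable (p : ℕ) (A : Type*) [CommRing A] (n : ℕ)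

instance : CommRing (FrobeniusTwist p A n) := inferInstanceAs (CommRing A)

def equiv : A ≃+* FrobeniusTwist p A n := RingEquiv.refl A

variable {A} {k : Type*} [CommRing k] [ExpChar k p] [Algebra k A]

instance : Algebra k (FrobeniusTwist p A n) :=
  ((algebraMap k A).comp (iterateFrobenius k p n)).toAlgebra

/-- Comorphism of the relative Frobenius `G^{(p^{-n-1})} → G^{(p^{-n})}`. -/
def frobenius [ExpChar A p] : FrobeniusTwist p A n →ₐ[k] FrobeniusTwist p A (n + 1) where
  toRingHom := _root_.frobenius A p
  commutes' c := by
    change algebraMap k A (c ^ p ^ n) ^ p = algebraMap k A (c ^ p ^ (n + 1))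
    rw [← map_pow, ← pow_mul, pow_succ]

end FrobeniusTwist

section TwistedPoint

variable {p : ℕ} {k A R : Type} [CommRing k] [ExpChar k p] [CommRing A] [CommRing R] [Algebra k A]
  [Algebra k R] {n : ℕ}

def IsTwistedPoint.toAlgHom {f : A →+* R} (hf : IsTwistedPoint p k n f) :
    FrobeniusTwist p A n →ₐ[k] R where
  toRingHom := f.comp (FrobeniusTwist.equiv p A n).symm.toRingHom
  commutes' := hf

theorem AlgHom.isTwistedPoint (φ : FrobeniusTwist p A n →ₐ[k] R) :
    IsTwistedPoint p k n (φ.toRingHom.comp (FrobeniusTwist.equiv p A n).toRingHom) :=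
  φ.commutes

variable [PerfectRing k p] {S : Type*} [CommRing S] [Algebra k S]

theorem FrobeniusTwist.algHom_comp_algebraMap (φ ψ : FrobeniusTwist p A n →ₐ[k] S) :
    (φ.toRingHom.comp (FrobeniusTwist.equiv p A n).toRingHom).comp (algebraMap k A) =
      (ψ.toRingHom.comp (FrobeniusTwist.equiv p A n).toRingHom).comp (algebraMap k A) := by
  ext c
  obtain ⟨d, rfl⟩ := (bijective_iterateFrobenius k p n).2 c
  exact (φ.commutes d).trans (ψ.commutes d).symm

end TwistedPoint

namespace FrobeniusTower

variable (p : ℕ) [Fact p.Prime] {k : Type} [Field k] [CharP k p] [PerfectRing k p]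
  {A : Type} [CommRing A] [Bialgebra k A] [ExpChar A p]
  {R : Type} [CommRing R] [Algebra k R] (x : ℕ → A →+* R) (hx : ∀ n, IsTwistedPoint p k n (x n))

open Algebra.TensorProduct

noncomputable def mulFrobeniusComap (n : ℕ) : A ⊗[k] A →+* R ⊗[k] FrobeniusTwist p A (n + 1) :=
  productRingHom _ _ (FrobeniusTwist.algHom_comp_algebraMap
    (includeLeft.comp (hx n).toAlgHom) (includeRight.comp (FrobeniusTwist.frobenius p n)))

theorem mulFrobeniusComap_tmul (n : ℕ) (u v : A) :
    mulFrobeniusComap p x hx n (u ⊗ₜ v) =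
      algebraMap R _ (x n u) * includeRight (FrobeniusTwist.equiv p A (n + 1) v) ^ p := by
  rw [mulFrobeniusComap, productRingHom_tmul, ← map_pow]
  rfl

/-- Comorphism of `y ↦ x n ⋆ F y : G^{(p^{-n-1})}_R → G^{(p^{-n})}_R`. -/
noncomputable def translateFrobeniusComap (n : ℕ) :
    FrobeniusTwist p A n →ₐ[k] R ⊗[k] FrobeniusTwist p A (n + 1) where
  toRingHom := (mulFrobeniusComap p x hx n).comp
    ((Bialgebra.comulAlgHom k A).toRingHom.comp (FrobeniusTwist.equiv p A n).symm.toRingHom)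
  commutes' c := by
    change mulFrobeniusComap p x hx n (Bialgebra.comulAlgHom k A (algebraMap k A (c ^ p ^ n))) = _
    rw [AlgHom.commutes, Algebra.TensorProduct.algebraMap_apply, mulFrobeniusComap_tmul, map_one,
      map_one, one_pow, mul_one, hx n c, ← IsScalarTower.algebraMap_apply]

theorem translateFrobeniusComap_equiv (n : ℕ) (a : A) :
    translateFrobeniusComap p x hx n (FrobeniusTwist.equiv p A n a) =
      mulFrobeniusComap p x hx n (Coalgebra.comul (R := k) a) :=
  rfl

noncomputable def transition (n : ℕ) :
    R ⊗[k] FrobeniusTwist p A n →ₐ[R] R ⊗[k] FrobeniusTwist p A (n + 1) :=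
  lift (Algebra.ofId R _) (translateFrobeniusComap p x hx n) fun _ _ => .all _ _

theorem transition_includeRight (n : ℕ) (a : FrobeniusTwist p A n) :
    transition p x hx n (includeRight a) = translateFrobeniusComap p x hx n a := by
  rw [includeRight_apply, transition, lift_tmul, map_one, one_mul]

/-- Stage `n` carries the universal point `y n`, and the transition to stage `n + 1` substitutes
`y n = x n ⋆ F (y (n + 1))`. -/
def SolutionRing : Type :=
  DirectLimit (fun n => R ⊗[k] FrobeniusTwist p A n) (AlgHom.natLERec (transition p x hx))

noncomputable instance : CommRing (SolutionRing p x hx) :=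
  inferInstanceAs (CommRing (DirectLimit _ (AlgHom.natLERec (transition p x hx))))

noncomputable instance : Algebra R (SolutionRing p x hx) :=
  inferInstanceAs (Algebra R (DirectLimit _ (AlgHom.natLERec (transition p x hx))))

noncomputable instance : Algebra k (SolutionRing p x hx) :=
  ((algebraMap R (SolutionRing p x hx)).comp (algebraMap k R)).toAlgebra

instance : IsScalarTower k R (SolutionRing p x hx) :=
  .of_algebraMap_eq' rfl

instance : Module.FaithfullyFlat R (SolutionRing p x hx) := by
  have : Nontrivial A := (Bialgebra.counitAlgHom k A).toRingHom.domain_nontrivial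
  have (n : ℕ) : Nontrivial (FrobeniusTwist p A n) := inferInstanceAs (Nontrivial A)
  exact Module.FaithfullyFlat.directLimit

noncomputable def ofLevel (n : ℕ) : R ⊗[k] FrobeniusTwist p A n →ₐ[R] SolutionRing p x hx :=
  DirectLimit.Algebra.of _ (AlgHom.natLERec (transition p x hx)) n

theorem ofLevel_transition (n : ℕ) (z : R ⊗[k] FrobeniusTwist p A n) :
    ofLevel p x hx (n + 1) (transition p x hx n z) = ofLevel p x hx n z := by
  rw [← AlgHom.natLERec_succ]
  exact DirectLimit.Algebra.of_f ..

noncomputable def solution (n : ℕ) : FrobeniusTwist p A n →ₐ[k] SolutionRing p x hx :=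
  ((ofLevel p x hx n).restrictScalars k).comp includeRight

theorem solution_eq_sum (n : ℕ) (a : A) {m : ℕ} (u v : Fin m → A)
    (huv : Coalgebra.comul (R := k) a = ∑ i, u i ⊗ₜ[k] v i) :
    solution p x hx n (FrobeniusTwist.equiv p A n a) =
      ∑ i, algebraMap R _ (x n (u i)) *
        solution p x hx (n + 1) (FrobeniusTwist.equiv p A (n + 1) (v i)) ^ p := by
  have hsol (m : ℕ) (b) : solution p x hx m b = ofLevel p x hx m (includeRight b) := rfl
  rw [hsol, ← ofLevel_transition, transition_includeRight, translateFrobeniusComap_equiv, huv,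
    map_sum, map_sum]
  simp only [mulFrobeniusComap_tmul, map_mul, map_pow, AlgHom.commutes, hsol]

end FrobeniusTower

theorem statement0_general
    (p : ℕ) [Fact p.Prime] (k : Type) [Field k] [CharP k p] [PerfectRing k p]
    (A : Type) [CommRing A] [HopfAlgebra k A] :
    ∀ (R : Type) (_ : CommRing R) (_ : Algebra k R)
      (x : ∀ _ : ℕ, A →+* R), (∀ n, IsTwistedPoint p k n (x n)) →
      ∃ (R' : Type) (_ : CommRing R') (_ : Algebra k R') (_ : Algebra R R')
        (_ : IsScalarTower k R R') (_ : Module.FaithfullyFlat R R')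
        (y : ∀ _ : ℕ, A →+* R'),
        (∀ n, IsTwistedPoint p k n (y n)) ∧
        ∀ (n : ℕ) (a : A), ∃ (m : ℕ) (u v : Fin m → A),
          Coalgebra.comul (R := k) a = ∑ i, u i ⊗ₜ[k] v i ∧
          y n a = ∑ i, algebraMap R R' (x n (u i)) * (y (n + 1) (v i)) ^ p := by
  intro R _ _ x hx
  have : Nontrivial A := (Bialgebra.counitAlgHom k A).toRingHom.domain_nontrivial
  have : CharP A p := charP_of_injective_algebraMap' k p
  refine ⟨FrobeniusTower.SolutionRing p x hx, inferInstance, inferInstance, inferInstance,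
    inferInstance, inferInstance,
    fun n => (FrobeniusTower.solution p x hx n).toRingHom.comp (FrobeniusTwist.equiv p A n),
    fun n => (FrobeniusTower.solution p x hx n).isTwistedPoint, fun n a => ?_⟩
  obtain ⟨m, u, v, huv⟩ := TensorProduct.exists_sum_tmul_eq (Coalgebra.comul (R := k) a)
  exact ⟨m, u, v, huv, FrobeniusTower.solution_eq_sum p x hx n a u v huv⟩

/-- Let `k` be a perfect field of characteristic `p > 0` and `G = Spec A` a
commutative affine group scheme of finite type over `k` (`A` is a finite type commutative,
cocommutative Hopf algebra over `k`).  Then `R¹lim` of the Frobenius tower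
`⋯ → G^{(1/p²)} → G^{(1/p)} → G` (each transition map the relative Frobenius) vanishes as an
fpqc abelian sheaf on `k`-algebras.  Concretely: the cokernel of `1 - F∘shift` on `∏ₙ G^{(1/pⁿ)}`
is locally trivial, i.e. for every `k`-algebra `R` and every family of points
`xₙ ∈ G^{(1/pⁿ)}(R)` there are a faithfully flat `R`-algebra `R'` and points
`yₙ ∈ G^{(1/pⁿ)}(R')` with `yₙ = xₙ ⋆ F(yₙ₊₁)` for all `n` (where `⋆` is the group law,
written via a finite representation of the comultiplication, and `F` is the Frobenius
transition, acting on points by `y ↦ y ∘ (a ↦ a^p)`). -/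
theorem statement0
    (p : ℕ) [Fact p.Prime] (k : Type) [Field k] [CharP k p] [PerfectRing k p]
    (A : Type) [CommRing A] [HopfAlgebra k A]
    (hft : Algebra.FiniteType k A)
    (hcomm : ∀ a : A, (TensorProduct.comm k A A) (Coalgebra.comul (R := k) a) =
      Coalgebra.comul (R := k) a) :
    ∀ (R : Type) (_ : CommRing R) (_ : Algebra k R)
      (x : ∀ _ : ℕ, A →+* R), (∀ n, IsTwistedPoint p k n (x n)) →
      ∃ (R' : Type) (_ : CommRing R') (_ : Algebra k R') (_ : Algebra R R')
        (_ : IsScalarTower k R R') (_ : Module.FaithfullyFlat R R')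
        (y : ∀ _ : ℕ, A →+* R'),
        (∀ n, IsTwistedPoint p k n (y n)) ∧
        ∀ (n : ℕ) (a : A), ∃ (m : ℕ) (u v : Fin m → A),
          Coalgebra.comul (R := k) a = ∑ i, u i ⊗ₜ[k] v i ∧
          y n a = ∑ i, algebraMap R R' (x n (u i)) * (y (n + 1) (v i)) ^ p :=
  statement0_general p k A
end

section
/- Let k be a field of characteristic p > 0 and let B be a perfect derived k-algebra, i.e., a coconnective derived commutative k-algebra on which the derived Frobenius endomorphism is an isomorphism. Then B is coconnective; more precisely, for any derived F_p-algebra B, the Frobenius endomorphism induces the zero map on π_i(B) for all i > 0, so if Frobenius is an isomorphism then π_i(B) = 0 for all i > 0. -/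
open CategoryTheory AlgebraicTopology

/-- The underlying simplicial abelian group of a simplicial commutative ring. -/
noncomputable abbrev simplicialAb (B : SimplicialObject CommRingCat.{0}) :
    SimplicialObject AddCommGrpCat.{0} :=
  ((SimplicialObject.whiskering _ _).obj
    (forget₂ CommRingCat RingCat ⋙ forget₂ RingCat AddCommGrpCat)).obj B

/-- The Frobenius endomorphism `x ↦ x^p` of a simplicial commutative `𝔽_p`-algebra, as an
endomorphism of the underlying simplicial abelian group. -/
noncomputable def frobNat (p : ℕ) [Fact p.Prime] (B : SimplicialObject CommRingCat.{0})
    (hchar : ∀ X : SimplexCategoryᵒᵖ, CharP (B.obj X) p) :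
    simplicialAb B ⟶ simplicialAb B where
  app X := by
    haveI := hchar X
    exact AddCommGrpCat.ofHom (frobenius (B.obj X) p).toAddMonoidHom
  naturality X Y f := by
    haveI := hchar X
    haveI := hchar Y
    refine AddCommGrpCat.ext fun (x : B.obj X) => ?_
    exact (map_pow (B.map f).hom x p).symm

/-! For a normalized cycle `a` of positive degree in a simplicial commutative ring and a normalized
chain `b` of the same degree, `w = s₀b · (s₀a - s₁a)` is normalized and `d₀w = b·a`, since
`d₁s₀ = d₁s₁ = id`, `d₀s₁ = s₀d₀` and `d_{k+1}s₀ = s₀d_k` for `k ≥ 1`. Taking `b = a^(p-1)` shows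
that `a^p` is a boundary, so Frobenius kills `π_i` for `i > 0`. If Frobenius is invertible, the
induced map on `π_i` is both zero and invertible, hence `π_i = 0`. -/

universe u

open Opposite Simplicial Limits Subobject

namespace CategoryTheory.SimplicialObject

variable {B : SimplicialObject CommRingCat.{u}} {n : ℕ}

lemma δ_zero_σ_mul_σ_sub_σ (a b : B _⦋n + 1⦌) (ha : B.δ 0 a = 0) :
    B.δ 0 (B.σ 0 b * (B.σ 0 a - B.σ 1 a)) = b * a := by
  have h00 (x : B _⦋n + 1⦌) : B.δ 0 (B.σ 0 x) = x :=
    ConcreteCategory.congr_hom (B.δ_comp_σ_self (i := 0)) x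
  have h01 : B.δ 0 (B.σ 1 a) = B.σ 0 (B.δ 0 a) := by
    simpa using ConcreteCategory.congr_hom (B.δ_comp_σ_of_le (i := 0) (j := 0) le_rfl) a
  simp [h00, h01, ha]

lemma δ_one_σ_mul_σ_sub_σ (a b : B _⦋n + 1⦌) :
    B.δ 1 (B.σ 0 b * (B.σ 0 a - B.σ 1 a)) = 0 := by
  have h10 (x : B _⦋n + 1⦌) : B.δ 1 (B.σ 0 x) = x :=
    ConcreteCategory.congr_hom (B.δ_comp_σ_succ (i := 0)) x
  have h11 : B.δ 1 (B.σ 1 a) = a :=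
    ConcreteCategory.congr_hom (B.δ_comp_σ_self' (i := 1) (j := 1) (by ext; simp)) a
  simp [h10, h11]

lemma δ_succ_succ_σ_mul_σ_sub_σ (a b : B _⦋n + 1⦌) (k : Fin (n + 1))
    (hb : B.δ k.succ b = 0) :
    B.δ k.succ.succ (B.σ 0 b * (B.σ 0 a - B.σ 1 a)) = 0 := by
  have h : B.δ k.succ.succ (B.σ 0 b) = B.σ 0 (B.δ k.succ b) :=
    ConcreteCategory.congr_hom
      (B.δ_comp_σ_of_gt (i := k.succ) (j := 0) (by simp [Fin.succ_pos])) b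
  simp [h, hb]

end CategoryTheory.SimplicialObject

namespace HomologicalComplex

variable {ι : Type*} {c : ComplexShape ι} {K L : HomologicalComplex AddCommGrpCat.{u} c}

lemma homologyMap_eq_zero_of_forall_exists_d_eq (f : K ⟶ L) (i j : ι)
    (h : ∀ x : K.X i, K.d i (c.next i) x = 0 → ∃ y : L.X j, L.d j i y = f.f i x) :
    homologyMap f i = 0 := by
  rw [← cancel_epi (K.homologyπ i), homologyπ_naturality, comp_zero]
  ext ξ
  obtain ⟨y, hy⟩ := h (K.iCycles i ξ) (ConcreteCategory.congr_hom (K.iCycles_d i _) ξ)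
  have hξ : cyclesMap f i ξ = L.toCycles j i y := by
    apply (AddCommGrpCat.mono_iff_injective (L.iCycles i)).1 inferInstance
    rw [← ConcreteCategory.comp_apply, ← ConcreteCategory.comp_apply, cyclesMap_i, toCycles_i]
    exact hy.symm
  rw [ConcreteCategory.comp_apply, hξ, ← ConcreteCategory.comp_apply, toCycles_comp_homologyπ]
  rfl

end HomologicalComplex

namespace AlgebraicTopology.NormalizedMooreComplex

section SimplicialAddCommGrp

variable {X : SimplicialObject AddCommGrpCat.{u}} {n : ℕ}

lemma arrow_objD_apply (x : (objX X (n + 1) : AddCommGrpCat)) :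
    (objX X n).arrow (objD X n x) = X.δ 0 ((objX X (n + 1)).arrow x) := by
  have h : objD X n ≫ (objX X n).arrow = (objX X (n + 1)).arrow ≫ X.δ 0 := by
    cases n <;> simp [objD]
  exact ConcreteCategory.congr_hom h x

lemma δ_succ_arrow_apply (x : (objX X (n + 1) : AddCommGrpCat)) (k : Fin (n + 1)) :
    X.δ k.succ ((objX X (n + 1)).arrow x) = 0 := by
  have h : (objX X (n + 1)).arrow ≫ X.δ k.succ = 0 := by
    rw [objX_add_one, ← factorThru_arrow _ _ (finset_inf_arrow_factors Finset.univ
      (fun k : Fin (n + 1) => kernelSubobject (X.δ k.succ)) k (Finset.mem_univ _)),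
      Category.assoc, kernelSubobject_arrow_comp, comp_zero]
  exact ConcreteCategory.congr_hom h x

lemma δ_arrow_apply_eq_zero_of_objD_eq_zero {x : (objX X (n + 1) : AddCommGrpCat)}
    (hx : objD X n x = 0) (i : Fin (n + 2)) : X.δ i ((objX X (n + 1)).arrow x) = 0 := by
  rcases Fin.eq_zero_or_eq_succ i with rfl | ⟨k, rfl⟩
  · rw [← arrow_objD_apply, hx, map_zero]
  · exact δ_succ_arrow_apply x k

lemma arrow_map_f_apply {Y : SimplicialObject AddCommGrpCat.{u}} (f : X ⟶ Y)
    (x : (objX X n : AddCommGrpCat)) :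
    (objX Y n).arrow ((map f).f n x) = f.app _ ((objX X n).arrow x) :=
  ConcreteCategory.congr_hom
    (show (map f).f n ≫ (objX Y n).arrow = (objX X n).arrow ≫ f.app _ by
      rw [map_f]; exact factorThru_arrow _ _ _) x

lemma exists_arrow_apply_eq (v : X _⦋n + 1⦌) (hv : ∀ k : Fin (n + 1), X.δ k.succ v = 0) :
    ∃ y : (objX X (n + 1) : AddCommGrpCat), (objX X (n + 1)).arrow y = v := by
  let f : AddCommGrpCat.of (ULift.{u} ℤ) ⟶ X _⦋n + 1⦌ :=
    AddCommGrpCat.ofHom ((zmultiplesHom _ v).comp AddEquiv.ulift.toAddMonoidHom)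
  have hf : (objX X (n + 1)).Factors f := by
    rw [objX_add_one]
    refine (finset_inf_factors _).mpr fun k _ => kernelSubobject_factors _ _ ?_
    ext z
    simp [f, hv k]
  exact ⟨factorThru _ f hf (ULift.up 1),
    (ConcreteCategory.congr_hom (factorThru_arrow _ f hf) (ULift.up 1)).trans (one_zsmul v)⟩

end SimplicialAddCommGrp

section SimplicialCommRing

variable {B : SimplicialObject CommRingCat.{0}} {n : ℕ}

lemma exists_arrow_objD_eq_mul (a b : B _⦋n + 1⦌) (ha : ∀ i, B.δ i a = 0)
    (hb : ∀ k : Fin (n + 1), B.δ k.succ b = 0) :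
    ∃ y : (objX (simplicialAb B) (n + 2) : AddCommGrpCat),
      (objX (simplicialAb B) (n + 1)).arrow (objD (simplicialAb B) (n + 1) y) = b * a := by
  obtain ⟨y, hy⟩ := exists_arrow_apply_eq (X := simplicialAb B)
    (B.σ 0 b * (B.σ 0 a - B.σ 1 a)) fun k => by
      rcases Fin.eq_zero_or_eq_succ k with rfl | ⟨k, rfl⟩
      · exact B.δ_one_σ_mul_σ_sub_σ a b
      · exact B.δ_succ_succ_σ_mul_σ_sub_σ a b k (hb k)
  refine ⟨y, ?_⟩
  rw [arrow_objD_apply, hy]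
  exact B.δ_zero_σ_mul_σ_sub_σ a b (ha 0)

lemma exists_arrow_objD_eq_pow {m : ℕ} (hm : 2 ≤ m) (a : B _⦋n + 1⦌) (ha : ∀ i, B.δ i a = 0) :
    ∃ y : (objX (simplicialAb B) (n + 2) : AddCommGrpCat),
      (objX (simplicialAb B) (n + 1)).arrow (objD (simplicialAb B) (n + 1) y) = a ^ m := by
  obtain ⟨y, hy⟩ := exists_arrow_objD_eq_mul a (a ^ (m - 1)) ha fun k => by
    rw [map_pow, ha, zero_pow (by omega)]
  exact ⟨y, hy.trans (by rw [← pow_succ, Nat.sub_add_cancel (by omega)])⟩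

end SimplicialCommRing

end AlgebraicTopology.NormalizedMooreComplex

open NormalizedMooreComplex in
lemma homologyMap_frobNat_eq_zero (p : ℕ) [Fact p.Prime] (B : SimplicialObject CommRingCat.{0})
    (hchar : ∀ X : SimplexCategoryᵒᵖ, CharP (B.obj X) p) {i : ℕ} (hi : 0 < i) :
    HomologicalComplex.homologyMap
      ((normalizedMooreComplex AddCommGrpCat).map (frobNat p B hchar)) i = 0 := by
  obtain ⟨n, rfl⟩ : ∃ n, i = n + 1 := Nat.exists_eq_succ_of_ne_zero hi.ne'
  refine HomologicalComplex.homologyMap_eq_zero_of_forall_exists_d_eq _ (n + 1) (n + 2)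
    fun x hx => ?_
  rw [ChainComplex.next_nat_succ, normalizedMooreComplex_objD] at hx
  obtain ⟨y, hy⟩ := exists_arrow_objD_eq_pow (Fact.out : p.Prime).two_le _
    (δ_arrow_apply_eq_zero_of_objD_eq_zero hx)
  refine ⟨y, (AddCommGrpCat.mono_iff_injective (objX (simplicialAb B) (n + 1)).arrow).1
    inferInstance ?_⟩
  rw [normalizedMooreComplex_objD]
  exact hy.trans (arrow_map_f_apply (frobNat p B hchar) x).symm

lemma isIso_frobNat (p : ℕ) [Fact p.Prime] (B : SimplicialObject CommRingCat.{0})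
    (hchar : ∀ X : SimplexCategoryᵒᵖ, CharP (B.obj X) p)
    (hbij : ∀ X : SimplexCategoryᵒᵖ, Function.Bijective (fun x : B.obj X => x ^ p)) :
    IsIso (frobNat p B hchar) :=
  have (X : SimplexCategoryᵒᵖ) : IsIso ((frobNat p B hchar).app X) :=
    (ConcreteCategory.isIso_iff_bijective _).2 (hbij X)
  NatIso.isIso_of_isIso_app _

/-- (Perfect derived rings are coconnective.)  Let `p` be a prime and let
`B` be a derived (here: simplicial) commutative `𝔽_p`-algebra.  Then the Frobenius
endomorphism of `B` induces the zero map on the homotopy groups `π_i(B)` (the homology of the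
normalized Moore complex) for all `i > 0`.  Consequently, if the Frobenius of `B` is an
isomorphism (i.e. `B` is perfect), then `π_i(B) = 0` for all `i > 0`, so `B` is
coconnective (discrete in the connective direction). -/
theorem statement15 (p : ℕ) [Fact p.Prime] (B : SimplicialObject CommRingCat.{0})
    (hchar : ∀ X : SimplexCategoryᵒᵖ, CharP (B.obj X) p) :
    (∀ i : ℕ, 0 < i →
      HomologicalComplex.homologyMap
        ((normalizedMooreComplex AddCommGrpCat).map (frobNat p B hchar)) i = 0) ∧
    ((∀ X : SimplexCategoryᵒᵖ, Function.Bijective (fun x : (B.obj X) => x ^ p)) →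
      ∀ i : ℕ, 0 < i →
        Limits.IsZero
          (((normalizedMooreComplex AddCommGrpCat).obj (simplicialAb B)).homology i)) := by
  refine ⟨fun i hi => homologyMap_frobNat_eq_zero p B hchar hi, fun hbij i hi => ?_⟩
  have := isIso_frobNat p B hchar hbij
  exact IsZero.of_epi_eq_zero _ (homologyMap_frobNat_eq_zero p B hchar hi)
end
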